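/- arXiv:2004.07306 — 4 statements merged into one kernel-verified Lean document; each statement's English description precedes it below -/
import Mathlib

section
/- Every abstract automorphism of Q is realized by conjugation in SU(2): for every group automorphism f of Q there exists a matrix A ∈ SU(2) such that A·q·A⁻¹ = f(q) for all q ∈ Q. -/
open Matrix Complex

noncomputable section

/-- The special unitary group over a star ring is a group (inverse = conjugate transpose). -/
instance grpSU {n : Type*} [DecidableEq n] [Fintype n] {α : Type*} [CommRing α] [StarRing α] :
    Group ↥(Matrix.specialUnitaryGroup n α) :=
  { (inferInstance : Monoid ↥(Matrix.specialUnitaryGroup n α)) with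
    inv := fun A => ⟨star A.1, by
      rw [Matrix.mem_specialUnitaryGroup_iff]
      refine ⟨Unitary.star_mem A.2.1, ?_⟩
      have hdet : A.1.det = 1 := A.2.2
      rw [Matrix.star_eq_conjTranspose, Matrix.det_conjTranspose, hdet, star_one]⟩
    inv_mul_cancel := fun A => Subtype.ext A.2.1.1 }

/-- `SU(2)`, the special unitary group of `2 × 2` complex matrices. -/
abbrev SU2 := Matrix.specialUnitaryGroup (Fin 2) ℂ

lemma mem_su2 (a b : ℂ) (h : a * (starRingEnd ℂ) a + b * (starRingEnd ℂ) b = 1) :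
    !![a, b; -((starRingEnd ℂ) b), (starRingEnd ℂ) a] ∈ Matrix.specialUnitaryGroup (Fin 2) ℂ := by
  rw [Matrix.mem_specialUnitaryGroup_iff]
  constructor
  · rw [Matrix.mem_unitaryGroup_iff]
    ext i j
    fin_cases i <;> fin_cases j <;>
      simp [Matrix.mul_apply, Fin.sum_univ_two, Matrix.star_eq_conjTranspose,
        Matrix.conjTranspose_apply, Matrix.one_apply] <;>
      first
      | ring1
      | linear_combination h
  · show Matrix.det _ = 1
    rw [Matrix.det_fin_two_of]
    linear_combination h

/-- The element `w = [[0,1],[-1,0]]` of `SU(2)`. -/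
def w : SU2 := ⟨!![0, 1; -1, 0], by
  have h := mem_su2 0 1 (by norm_num)
  simp only [map_zero, _root_.map_one] at h
  exact h⟩

/-- The element `j = [[I,0],[0,-I]]` of `SU(2)`. -/
def jmat : SU2 := ⟨!![Complex.I, 0; 0, -Complex.I], by
  have h := mem_su2 Complex.I 0 (by simp [Complex.conj_I, Complex.I_mul_I])
  simp only [map_zero, neg_zero, Complex.conj_I] at h
  exact h⟩

/-- The quaternion subgroup `Q` of `SU(2)`, generated by `i = [[0,1],[-1,0]]` and
`j = [[I,0],[0,-I]]`. -/
def Q : Subgroup SU2 := Subgroup.closure {w, jmat}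

/-!
An automorphism `f` of `Q` sends `(i, j)` to a pair `(a, b)` satisfying the quaternion relations
`a² = b² = -1`, `ba = -ab`: the squares of `i`, `j`, `ij` equal the involution `-1`, and `-1` is the
only involution `≠ 1` in `SU(2)`, so `f` fixes it. Averaging over the cosets of `{±1}`,
`M(u) = Σ_{e ∈ {1, i, j, ij}} f(e) u e⁻¹` satisfies `a M(u) = M(u) i` and `b M(u) = M(u) j`, and the
`M(u)` are not all zero because `Σ_u M(u) u⁻¹ = 4`. All `M(u)` lie in the real algebra of matrices
`[[α, β], [-β̄, ᾱ]]`, whose nonzero elements are positive multiples of elements of `SU(2)`; the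
normalised `M(u)` conjugates `i, j` to `a, b`, hence agrees with `f` on all of `Q`.
-/

open ComplexConjugate

local notation "Mat₂" => Matrix (Fin 2) (Fin 2) ℂ

section QuaternionRelations

variable {R : Type*} [Ring R]

def IsQuaternionPair (i j : R) : Prop :=
  i * i = -1 ∧ j * j = -1 ∧ j * i = -(i * j)

/-- `Σ_{e ∈ {1, i, j, ij}} φ(e) * u * e⁻¹` for the map `φ : i ↦ i', j ↦ j'`. -/
def intertwiner (i j i' j' u : R) : R :=
  u - i' * u * i - j' * u * j + i' * j' * u * (j * i)

variable {i j i' j' : R}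

lemma IsQuaternionPair.i_mul_i_mul (h : IsQuaternionPair i j) (z : R) : i * (i * z) = -z := by
  rw [← mul_assoc, h.1, neg_one_mul]

lemma IsQuaternionPair.j_mul_j_mul (h : IsQuaternionPair i j) (z : R) : j * (j * z) = -z := by
  rw [← mul_assoc, h.2.1, neg_one_mul]

lemma IsQuaternionPair.j_mul_i_mul (h : IsQuaternionPair i j) (z : R) :
    j * (i * z) = -(i * (j * z)) := by
  rw [← mul_assoc, h.2.2, neg_mul, mul_assoc]

lemma isQuaternionPair_of_mul_self {a b : R} (ha : a * a = -1) (hb : b * b = -1)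
    (hab : a * b * (a * b) = -1) : IsQuaternionPair a b := by
  refine ⟨ha, hb, ?_⟩
  calc b * a = (a * a) * (b * a) * (b * b) := by rw [ha, hb]; noncomm_ring
    _ = a * (a * b * (a * b)) * b := by noncomm_ring
    _ = -(a * b) := by rw [hab]; noncomm_ring

lemma intertwiner_spec (hx : IsQuaternionPair i j) (hy : IsQuaternionPair i' j') (u : R) :
    i' * intertwiner i j i' j' u = intertwiner i j i' j' u * i ∧
      j' * intertwiner i j i' j' u = intertwiner i j i' j' u * j := by
  constructor <;>
  · simp only [intertwiner, mul_add, add_mul, mul_sub, sub_mul, mul_neg, neg_mul, mul_assoc,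
      hx.i_mul_i_mul, hy.i_mul_i_mul, hy.j_mul_j_mul, hy.j_mul_i_mul, hx.1, hx.2.1, hx.2.2,
      mul_one, neg_neg]
    abel

lemma sum_intertwiner_mul (hx : IsQuaternionPair i j) (i' j' : R) :
    intertwiner i j i' j' 1 - intertwiner i j i' j' i * i - intertwiner i j i' j' j * j
      + intertwiner i j i' j' (i * j) * (j * i) = 4 := by
  simp only [intertwiner, add_mul, sub_mul, mul_neg, neg_mul, mul_assoc, hx.i_mul_i_mul,
    hx.j_mul_i_mul, hx.1, hx.2.1, hx.2.2, mul_one, neg_neg]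
  abel_nf
  norm_num

lemma intertwiner_mem {S : Type*} [SetLike S R] [SubringClass S R] {s : S} {u : R}
    (hi : i ∈ s) (hj : j ∈ s) (hi' : i' ∈ s) (hj' : j' ∈ s) (hu : u ∈ s) :
    intertwiner i j i' j' u ∈ s := by
  unfold intertwiner
  apply_rules [add_mem, sub_mem, mul_mem]

lemma exists_intertwiner_ne_zero (h4 : (4 : R) ≠ 0) (hx : IsQuaternionPair i j) (i' j' : R) :
    ∃ u ∈ Subring.closure {i, j}, intertwiner i j i' j' u ≠ 0 := by
  by_contra! h
  have hi : i ∈ Subring.closure {i, j} := Subring.subset_closure (by simp)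
  have hj : j ∈ Subring.closure {i, j} := Subring.subset_closure (by simp)
  have key := sum_intertwiner_mul hx i' j'
  rw [h 1 (Subring.one_mem _), h i hi, h j hj, h (i * j) (Subring.mul_mem _ hi hj)] at key
  simp only [zero_mul, sub_zero, add_zero] at key
  exact h4 key.symm

end QuaternionRelations

namespace Matrix

variable (R : Type*) [CommRing R] [StarRing R]

/-- For `2 × 2` matrices, `star M = adjugate M` says `M = [[α, β], [-β̄, ᾱ]]`: this is the image of
the quaternions. -/
def quaternionSubring : Subring (Matrix (Fin 2) (Fin 2) R) where
  carrier := {M | star M = adjugate M}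
  mul_mem' {M N} (hM : star M = adjugate M) (hN : star N = adjugate N) := by
    change star (M * N) = adjugate (M * N)
    rw [star_mul, adjugate_mul_distrib, hM, hN]
  one_mem' := by simp
  add_mem' {M N} (hM : star M = adjugate M) (hN : star N = adjugate N) := by
    change star (M + N) = adjugate (M + N)
    rw [star_add, hM, hN, adjugate_fin_two M, adjugate_fin_two N, adjugate_fin_two (M + N)]
    ext i j; fin_cases i <;> fin_cases j <;> simp <;> abel
  zero_mem' := by simp
  neg_mem' {M} (hM : star M = adjugate M) := by
    change star (-M) = adjugate (-M)
    rw [star_neg, hM, adjugate_fin_two M, adjugate_fin_two (-M)]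
    ext i j; fin_cases i <;> fin_cases j <;> simp

variable {R}

lemma mem_quaternionSubring_iff {M : Matrix (Fin 2) (Fin 2) R} :
    M ∈ quaternionSubring R ↔ star M = adjugate M := Iff.rfl

lemma mem_quaternionSubring_of_mem_specialUnitaryGroup {g : Matrix (Fin 2) (Fin 2) R}
    (hg : g ∈ specialUnitaryGroup (Fin 2) R) : g ∈ quaternionSubring R := by
  rw [mem_quaternionSubring_iff]
  calc star g = star g * (g * adjugate g) := by
        rw [mul_adjugate, (mem_specialUnitaryGroup_iff.1 hg).2, one_smul, mul_one]
    _ = adjugate g := by rw [← mul_assoc, hg.1.1, one_mul]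

lemma eq_of_mem_quaternionSubring {M : Matrix (Fin 2) (Fin 2) R}
    (hM : M ∈ quaternionSubring R) :
    M = !![M 0 0, M 0 1; -star (M 0 1), star (M 0 0)] := by
  have h := congrFun₂ hM
  rw [adjugate_fin_two] at h
  ext i j; fin_cases i <;> fin_cases j
  · rfl
  · rfl
  · simpa using congrArg star (h 0 1)
  · simpa using congrArg star (h 1 1)

lemma eq_neg_one_of_mul_self_eq_one {K : Type*} [Field K] [NeZero (2 : K)]
    {g : Matrix (Fin 2) (Fin 2) K} (hdet : g.det = 1) (hg : g * g = 1) (hne : g ≠ 1) :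
    g = -1 := by
  have hadj : adjugate g = g := by
    calc adjugate g = adjugate g * (g * g) := by rw [hg, mul_one]
      _ = g := by rw [← mul_assoc, adjugate_mul, hdet, one_smul, one_mul]
  have h01 := congrFun₂ hadj 0 1
  have h10 := congrFun₂ hadj 1 0
  have h11 := congrFun₂ hadj 1 1
  simp only [adjugate_fin_two, of_apply, cons_val', cons_val_one, cons_val_fin_one,
    cons_val_zero] at h01 h10 h11
  have h01' : g 0 1 = 0 :=
    (mul_eq_zero.1 (by linear_combination -h01 : (2 : K) * g 0 1 = 0)).resolve_left two_ne_zero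
  have h10' : g 1 0 = 0 :=
    (mul_eq_zero.1 (by linear_combination -h10 : (2 : K) * g 1 0 = 0)).resolve_left two_ne_zero
  rw [det_fin_two, h01', ← h11, zero_mul, sub_zero] at hdet
  have hg' : g = !![g 0 0, 0; 0, g 0 0] := by
    ext i j; fin_cases i <;> fin_cases j <;> simp [h01', h10', h11]
  rcases mul_self_eq_one_iff.1 hdet with h | h
  · exact absurd (by rw [hg', h]; exact one_fin_two.symm) hne
  · rw [hg', h]; ext i j; fin_cases i <;> fin_cases j <;> simp

end Matrix

lemma exists_smul_eq_of_mem_quaternionSubring {M : Mat₂} (hM : M ∈ quaternionSubring ℂ)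
    (hM0 : M ≠ 0) : ∃ (A : SU2) (c : ℂ), (A : Mat₂) = c • M := by
  set n := normSq (M 0 0) + normSq (M 0 1)
  have hn : 0 < n := by
    by_contra! hn
    have h00 := normSq_nonneg (M 0 0)
    have h01 := normSq_nonneg (M 0 1)
    have hM00 : M 0 0 = 0 := normSq_eq_zero.1 (by linarith)
    have hM01 : M 0 1 = 0 := normSq_eq_zero.1 (by linarith)
    refine hM0 ?_
    rw [eq_of_mem_quaternionSubring hM, hM00, hM01]
    ext i j; fin_cases i <;> fin_cases j <;> simp
  set c : ℂ := (((Real.sqrt n)⁻¹ : ℝ) : ℂ)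
  refine ⟨⟨_, mem_su2 (c * M 0 0) (c * M 0 1) ?_⟩, c, ?_⟩
  · calc c * M 0 0 * conj (c * M 0 0) + c * M 0 1 * conj (c * M 0 1)
        = (((Real.sqrt n)⁻¹ ^ 2 * n : ℝ) : ℂ) := by
          simp only [map_mul, c, conj_ofReal, n]; push_cast; rw [← mul_conj, ← mul_conj]; ring
      _ = 1 := by rw [inv_pow, Real.sq_sqrt hn.le, inv_mul_cancel₀ hn.ne', ofReal_one]
  · conv_rhs => rw [eq_of_mem_quaternionSubring hM]
    ext i j; fin_cases i <;> fin_cases j <;> simp [c]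

lemma mul_mul_inv_eq_of_coe_eq_smul {A x y : SU2} {c : ℂ} {M : Mat₂} (hA : (A : Mat₂) = c • M)
    (h : (y : Mat₂) * M = M * x) : A * x * A⁻¹ = y := by
  refine mul_inv_eq_of_eq_mul (Subtype.ext ?_)
  change (A : Mat₂) * x = y * A
  rw [hA, smul_mul_assoc, mul_smul_comm, h]

lemma MonoidHom.mul_mul_inv_eq_of_eqOn_closure {G : Type*} [Group G] {s : Set G}
    (f : Subgroup.closure s →* G) (A : G)
    (h : ∀ x (hx : x ∈ s), A * x * A⁻¹ = f ⟨x, Subgroup.subset_closure hx⟩)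
    (q : Subgroup.closure s) : A * q * A⁻¹ = f q := by
  have := MonoidHom.eq_of_eqOn_dense Subgroup.closure_closure_coe_preimage
    (f := (MulAut.conj A).toMonoidHom.comp (Subgroup.closure s).subtype) (g := f)
    (fun x hx => h x hx)
  exact DFunLike.congr_fun this q

lemma MulEquiv.coe_mul_self_eq_neg_one {H : Subgroup SU2} (f : H ≃* H) {x : H}
    (hx : (x : Mat₂) * x = -1) : (f x : Mat₂) * f x = -1 := by
  have hxx : ((x * x : H) : Mat₂) = -1 := hx
  have hne : x * x ≠ 1 := fun h => by
    have h00 := congrFun₂ hxx 0 0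
    rw [h] at h00
    norm_num at h00
  have hsq : (x * x) * (x * x) = 1 := by
    refine Subtype.ext (Subtype.ext ?_)
    change ((x * x : H) : Mat₂) * ((x * x : H) : Mat₂) = 1
    rw [hxx, neg_one_mul, neg_neg]
  rw [show (f x : Mat₂) * f x = ((f (x * x) : SU2) : Mat₂) by rw [map_mul]; rfl]
  refine eq_neg_one_of_mul_self_eq_one (f (x * x)).1.2.2 ?_ ?_
  · change ((f (x * x) * f (x * x) : H) : Mat₂) = 1
    rw [← map_mul, hsq, map_one]; rfl
  · intro h
    refine hne (f.injective ?_)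
    rw [map_one]
    exact Subtype.ext (Subtype.ext h)

def wQ : Q := ⟨w, Subgroup.subset_closure (by simp)⟩

def jQ : Q := ⟨jmat, Subgroup.subset_closure (by simp)⟩

lemma w_mul_w : (w : Mat₂) * w = -1 := by
  ext i j; fin_cases i <;> fin_cases j <;> simp [w]

lemma jmat_mul_jmat : (jmat : Mat₂) * jmat = -1 := by
  ext i j; fin_cases i <;> fin_cases j <;> simp [jmat]

lemma w_mul_jmat_mul_self : (w : Mat₂) * jmat * (w * jmat) = -1 := by
  ext i j; fin_cases i <;> fin_cases j <;> simp [w, jmat]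

lemma isQuaternionPair_w_jmat : IsQuaternionPair (w : Mat₂) jmat :=
  isQuaternionPair_of_mul_self w_mul_w jmat_mul_jmat w_mul_jmat_mul_self

lemma isQuaternionPair_map (f : Q ≃* Q) : IsQuaternionPair ((f wQ : SU2) : Mat₂) (f jQ) := by
  refine isQuaternionPair_of_mul_self (f.coe_mul_self_eq_neg_one (x := wQ) w_mul_w)
    (f.coe_mul_self_eq_neg_one (x := jQ) jmat_mul_jmat) ?_
  have h := f.coe_mul_self_eq_neg_one (x := wQ * jQ) w_mul_jmat_mul_self
  rwa [map_mul] at h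

/-- Every abstract automorphism of `Q` is realized by conjugation in `SU(2)`. -/
theorem aut_Q_realized_by_conjugation :
    ∀ f : ↥Q ≃* ↥Q, ∃ A : SU2, ∀ q : ↥Q,
      A * (q : SU2) * A⁻¹ = ((f q : ↥Q) : SU2) := by
  intro f
  have h4 : (4 : Mat₂) ≠ 0 := fun h => by simpa [ofNat_apply] using congrFun₂ h 0 0
  obtain ⟨u, hu, hM⟩ :=
    exists_intertwiner_ne_zero h4 isQuaternionPair_w_jmat ((f wQ : SU2) : Mat₂) (f jQ)
  have hSU2 (g : SU2) : (g : Mat₂) ∈ quaternionSubring ℂ :=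
    mem_quaternionSubring_of_mem_specialUnitaryGroup g.2
  have huH : u ∈ quaternionSubring ℂ :=
    Subring.closure_le.2 (by simp [Set.insert_subset_iff, hSU2]) hu
  obtain ⟨A, c, hA⟩ := exists_smul_eq_of_mem_quaternionSubring
    (intertwiner_mem (hSU2 w) (hSU2 jmat) (hSU2 _) (hSU2 _) huH) hM
  obtain ⟨hw, hj⟩ := intertwiner_spec isQuaternionPair_w_jmat (isQuaternionPair_map f) u
  refine ⟨A, MonoidHom.mul_mul_inv_eq_of_eqOn_closure (Q.subtype.comp f.toMonoidHom) A ?_⟩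
  rintro x (rfl | rfl)
  · exact mul_mul_inv_eq_of_coe_eq_smul hA hw
  · exact mul_mul_inv_eq_of_coe_eq_smul hA hj
end
end

section
/- The centralizer of S in SU(2) equals {1, −1}, and this set also equals the center of S. -/
open Matrix Complex

noncomputable section

/-- The negative of the identity matrix, as an element of `SU(2)`. -/
def negOne : SU2 := ⟨!![-1, 0; 0, -1], by
  have h := mem_su2 (-1) 0 (by norm_num)
  simp only [map_zero, neg_zero, map_neg, _root_.map_one] at h
  exact h⟩

/-- The underlying set of the diagonal maximal torus of `SU(2)`: the matrices
`diag (a, conj a)` with `a` a complex number of absolute value `1`. -/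
def Tset : Set SU2 :=
  {x : SU2 | ∃ a : ℂ, ‖a‖ = 1 ∧
    (x : Matrix (Fin 2) (Fin 2) ℂ) = !![a, 0; 0, (starRingEnd ℂ) a]}

/-- The maximal discrete 2-toral subgroup `S` of `SU(2)`, generated by `w` together with
the elements of the diagonal maximal torus of 2-power order. -/
def S : Subgroup SU2 :=
  Subgroup.closure ({w} ∪ {x : SU2 | x ∈ Tset ∧ ∃ n : ℕ, x ^ 2 ^ n = 1})

/-!
Both `w` and `diag(i, -i)` lie in `S`. A matrix commuting with `diag(i, -i)` is diagonal, and a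
diagonal matrix commuting with `w` is scalar; a scalar matrix of determinant one is `±1`.
Conversely `-1` is central in `SU(2)` and lies in `S`. Hence the centralizer of `S` is `{1, -1}`,
which is contained in `S` and therefore is also the center of `S`.
-/

namespace Matrix

variable {R : Type*} [CommRing R] [NoZeroDivisors R]

theorem apply_eq_zero_of_commute_diagonal {n : Type*} [Fintype n] [DecidableEq n] {d : n → R}
    {m : Matrix n n R} (h : Commute (diagonal d) m) {i j : n} (hij : d i ≠ d j) : m i j = 0 := by
  have := congrFun (congrFun h.eq i) j
  rw [diagonal_mul, mul_diagonal] at this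
  exact (mul_eq_zero.mp (by linear_combination this : (d i - d j) * m i j = 0)).resolve_left
    (sub_ne_zero.mpr hij)

theorem fin_two_eq_smul_one_of_commute {a b : R} (hab : a ≠ b) {m : Matrix (Fin 2) (Fin 2) R}
    (hd : Commute !![a, 0; 0, b] m) (hw : Commute !![0, 1; -1, 0] m) : m = m 0 0 • 1 := by
  rw [← diagonal_vec2] at hd
  have h01 := apply_eq_zero_of_commute_diagonal hd (i := 0) (j := 1) hab
  have h10 := apply_eq_zero_of_commute_diagonal hd (i := 1) (j := 0) hab.symm
  have h11 : m 1 1 = m 0 0 := by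
    simpa [mul_apply, Fin.sum_univ_two] using congrFun (congrFun hw.eq 0) 1
  ext i j
  fin_cases i <;> fin_cases j <;> simp [h01, h10, h11]

end Matrix

open ComplexConjugate

lemma coe_negOne : (negOne : Matrix (Fin 2) (Fin 2) ℂ) = -1 := by
  ext i j
  fin_cases i <;> fin_cases j <;> simp [negOne]

lemma negOne_mem_center : negOne ∈ Subgroup.center SU2 :=
  Subgroup.mem_center_iff.mpr fun g => Subtype.ext <| by
    change (g : Matrix (Fin 2) (Fin 2) ℂ) * negOne = negOne * g
    rw [coe_negOne, mul_neg_one, neg_one_mul]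

lemma negOne_mem_S : negOne ∈ S := by
  refine Subgroup.subset_closure (Or.inr ⟨⟨-1, by simp, ?_⟩, 1, Subtype.ext ?_⟩)
  · ext i j
    fin_cases i <;> fin_cases j <;> simp [negOne]
  · change (negOne : Matrix (Fin 2) (Fin 2) ℂ) ^ 2 = 1
    rw [coe_negOne, neg_one_sq]

lemma w_mem_S : w ∈ S := Subgroup.subset_closure (Or.inl rfl)

def diagI : SU2 := ⟨!![I, 0; 0, conj I], by simpa using mem_su2 I 0 (by simp)⟩

lemma diagI_mem_S : diagI ∈ S := by
  refine Subgroup.subset_closure (Or.inr ⟨⟨I, by simp, rfl⟩, 2, Subtype.ext ?_⟩)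
  change !![I, 0; 0, conj I] ^ 4 = 1
  ext i j
  fin_cases i <;> fin_cases j <;> simp [pow_succ, conj_I]

lemma eq_one_or_negOne_of_commute {x : SU2} (hw : Commute w x) (hd : Commute diagI x) :
    x = 1 ∨ x = negOne := by
  have hI : I ≠ conj I := fun h => by simpa using conj_eq_iff_im.mp h.symm
  have hx : (x : Matrix (Fin 2) (Fin 2) ℂ) = (x : Matrix (Fin 2) (Fin 2) ℂ) 0 0 • 1 :=
    fin_two_eq_smul_one_of_commute hI (congrArg Subtype.val hd.eq) (congrArg Subtype.val hw.eq)
  have hsq : (x : Matrix (Fin 2) (Fin 2) ℂ) 0 0 ^ 2 = 1 := by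
    have hdet : det (x : Matrix (Fin 2) (Fin 2) ℂ) = 1 := x.2.2
    rwa [hx, det_smul, det_one, mul_one, Fintype.card_fin] at hdet
  rcases sq_eq_one_iff.mp hsq with h | h
  · exact Or.inl <| Subtype.ext <| by rw [hx, h, one_smul]; rfl
  · exact Or.inr <| Subtype.ext <| by rw [hx, h, neg_one_smul, coe_negOne]

/-- The centralizer of `S` in `SU(2)` equals `{1, -1}`, which is also the center of `S`. -/
theorem centralizer_of_S :
    ((Subgroup.centralizer (S : Set SU2) : Set SU2) = {1, negOne}) ∧
    (({1, negOne} : Set SU2) = {x : SU2 | x ∈ S ∧ ∀ s ∈ S, s * x = x * s}) := by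
  have hC : (Subgroup.centralizer (S : Set SU2) : Set SU2) = {1, negOne} := by
    ext x
    refine ⟨fun hx => eq_one_or_negOne_of_commute (hx w w_mem_S) (hx diagI diagI_mem_S), ?_⟩
    rintro (rfl | rfl)
    exacts [one_mem _, Subgroup.center_le_centralizer _ negOne_mem_center]
  have hCS : (Subgroup.centralizer (S : Set SU2) : Set SU2) ⊆ S := by
    rw [hC]
    exact Set.pair_subset (one_mem S) negOne_mem_S
  refine ⟨hC, ?_⟩
  rw [← hC]
  ext x
  exact ⟨fun hx => ⟨hCS hx, hx⟩, fun hx => hx.2⟩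
end
end

section
/- An element diag(a, conj a) of the diagonal maximal torus T of SU(2) normalizes the quaternion subgroup Q if and only if a⁸ = 1; that is, the intersection of T with the normalizer of Q in SU(2) is the cyclic group of order 8 generated by diag(e^{iπ/4}, e^{−iπ/4}). -/
open Matrix Complex

noncomputable section

/-- The element `diag (e^{iπ/4}, e^{-iπ/4})` of `SU(2)`. -/
def zeta : SU2 :=
  ⟨!![Complex.exp ((Real.pi : ℂ) * Complex.I / 4), 0; 0,
      Complex.exp (-((Real.pi : ℂ) * Complex.I / 4))], by
    have hconj : (starRingEnd ℂ) (Complex.exp ((Real.pi : ℂ) * Complex.I / 4)) =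
        Complex.exp (-((Real.pi : ℂ) * Complex.I / 4)) := by
      rw [← Complex.exp_conj]
      congr 1
      have h4 : (starRingEnd ℂ) (4 : ℂ) = 4 := map_ofNat _ 4
      simp [map_div₀, Complex.conj_ofReal, h4]
      ring
    have h := mem_su2 (Complex.exp ((Real.pi : ℂ) * Complex.I / 4)) 0 (by
      rw [hconj, ← Complex.exp_add, add_neg_cancel, Complex.exp_zero]
      simp)
    rw [hconj] at h
    simpa using h⟩

/-!
The torus is the image of the circle under `z ↦ diag (z, conj z)`. Conjugation by
`t = diag (z, conj z)` fixes `j`, which lies in the abelian group `T`, and sends `w` to `t² w`,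
because `w` acts on `T` by inversion. So `t` normalizes `Q = ⟨w, j⟩` iff `t² ∈ Q`. Every element
of `Q` is a monomial matrix with fourth roots of unity as entries, so the torus elements of `Q` are
the `diag (u, conj u)` with `u⁴ = 1`, i.e. the powers of `j`. Hence `t` normalizes `Q` iff
`z⁸ = 1`, i.e. iff `z` is a power of the primitive eighth root of unity `e^{iπ/4}`.
-/

open ComplexConjugate Subgroup
open scoped Real

lemma Circle.ker_powMonoidHom_eq_zpowers {ζ : Circle} {n : ℕ} [NeZero n]
    (hζ : IsPrimitiveRoot (ζ : ℂ) n) : (powMonoidHom n : Circle →* Circle).ker = zpowers ζ := by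
  ext z
  rw [MonoidHom.mem_ker, powMonoidHom_apply, mem_zpowers_iff]
  refine ⟨fun hz => ?_, ?_⟩
  · obtain ⟨k, -, hk⟩ :=
      hζ.eq_pow_of_pow_eq_one (ξ := (z : ℂ)) (by exact_mod_cast congrArg Subtype.val hz)
    exact ⟨k, Circle.ext (by simpa using hk)⟩
  · rintro ⟨k, rfl⟩
    have hζn : ζ ^ n = 1 :=
      (hζ.of_map_of_injective (f := Circle.coeHom) Circle.coe_injective).pow_eq_one
    rw [← zpow_natCast, ← _root_.zpow_mul, mul_comm, _root_.zpow_mul, zpow_natCast, hζn,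
      _root_.one_zpow]

lemma coe_SU2_inv (x : SU2) :
    ((x⁻¹ : SU2) : Matrix (Fin 2) (Fin 2) ℂ) = star (x : Matrix (Fin 2) (Fin 2) ℂ) := rfl

lemma coe_w : (w : Matrix (Fin 2) (Fin 2) ℂ) = !![0, 1; -1, 0] := rfl

lemma coe_jmat : (jmat : Matrix (Fin 2) (Fin 2) ℂ) = !![Complex.I, 0; 0, -Complex.I] := rfl

lemma w_mem_Q : w ∈ Q := subset_closure (by simp)

lemma jmat_mem_Q : jmat ∈ Q := subset_closure (by simp)

def torusHom : Circle →* SU2 where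
  toFun z := ⟨!![(z : ℂ), 0; 0, conj (z : ℂ)],
    by simpa using mem_su2 z 0 (by simp [Complex.mul_conj])⟩
  map_one' := Subtype.ext (by simp [Matrix.one_fin_two])
  map_mul' z z' := Subtype.ext (by simp)

@[simp]
lemma coe_torusHom (z : Circle) :
    (torusHom z : Matrix (Fin 2) (Fin 2) ℂ) = !![(z : ℂ), 0; 0, conj (z : ℂ)] := rfl

lemma torusHom_injective : Function.Injective torusHom := fun z z' h =>
  Circle.ext <| by simpa using congrArg (fun x : SU2 => (x : Matrix (Fin 2) (Fin 2) ℂ) 0 0) h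

lemma coe_range_torusHom : (torusHom.range : Set SU2) = Tset := by
  ext x
  refine ⟨?_, ?_⟩
  · rintro ⟨z, rfl⟩
    exact ⟨z, Circle.norm_coe z, rfl⟩
  · rintro ⟨a, ha, hx⟩
    exact ⟨⟨a, mem_sphere_zero_iff_norm.2 ha⟩, Subtype.ext hx.symm⟩

lemma coe_circleExp_pi_div_two : (Circle.exp (π / 2) : ℂ) = Complex.I := by
  rw [Circle.coe_exp]
  push_cast
  exact Complex.exp_pi_div_two_mul_I

lemma jmat_eq_torusHom : jmat = torusHom (Circle.exp (π / 2)) := by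
  ext i j
  fin_cases i <;> fin_cases j <;> simp [coe_jmat]

lemma isPrimitiveRoot_circleExp_pi_div_four : IsPrimitiveRoot (Circle.exp (π / 4) : ℂ) 8 := by
  convert Complex.isPrimitiveRoot_exp 8 (by norm_num) using 1
  rw [Circle.coe_exp]
  congr 1
  push_cast
  ring

lemma zeta_eq_torusHom : zeta = torusHom (Circle.exp (π / 4)) := by
  have harg : (π : ℂ) / 4 * Complex.I = π * Complex.I / 4 := by ring
  ext i j
  fin_cases i <;> fin_cases j <;> simp [zeta, harg, ← Complex.exp_conj, map_ofNat, neg_div]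

lemma w_mul_torusHom_mul_w_inv (z : Circle) : w * torusHom z * w⁻¹ = torusHom z⁻¹ := by
  ext i j
  fin_cases i <;> fin_cases j <;> simp [coe_SU2_inv, coe_w, Matrix.mul_apply, Fin.sum_univ_two]

lemma torusHom_mul_w_mul_inv (z : Circle) :
    torusHom z * w * (torusHom z)⁻¹ = torusHom (z ^ 2) * w :=
  calc torusHom z * w * (torusHom z)⁻¹ = torusHom z * (w * torusHom z⁻¹ * w⁻¹) * w := by
        rw [map_inv]; group
    _ = torusHom (z ^ 2) * w := by rw [w_mul_torusHom_mul_w_inv, inv_inv, ← map_mul, sq]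

lemma torusHom_mul_jmat_mul_inv (z : Circle) : torusHom z * jmat * (torusHom z)⁻¹ = jmat := by
  rw [jmat_eq_torusHom, ← map_inv, ← map_mul, ← map_mul, mul_inv_cancel_comm]

def monomialFourthRoots : Subgroup SU2 where
  carrier := {x | let m := (x : Matrix (Fin 2) (Fin 2) ℂ)
    (m 0 1 = 0 ∧ m 1 0 = 0 ∧ m 0 0 ^ 4 = 1 ∧ m 1 1 ^ 4 = 1) ∨
    (m 0 0 = 0 ∧ m 1 1 = 0 ∧ m 0 1 ^ 4 = 1 ∧ m 1 0 ^ 4 = 1)}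
  one_mem' := Or.inl (by simp)
  mul_mem' := by
    rintro x y (⟨h1, h2, h3, h4⟩ | ⟨h1, h2, h3, h4⟩) (⟨g1, g2, g3, g4⟩ | ⟨g1, g2, g3, g4⟩) <;>
      [left; right; right; left] <;>
      simp [Matrix.mul_apply, Fin.sum_univ_two, h1, h2, h3, h4, g1, g2, g3, g4, mul_pow]
  inv_mem' := by
    rintro x (⟨h1, h2, h3, h4⟩ | ⟨h1, h2, h3, h4⟩) <;> [left; right] <;>
      simp [coe_SU2_inv, Matrix.star_apply, h1, h2, ← map_pow, h3, h4]

lemma Q_le_monomialFourthRoots : Q ≤ monomialFourthRoots := by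
  rw [Q, closure_le, Set.insert_subset_iff, Set.singleton_subset_iff]
  exact ⟨Or.inr (by norm_num [coe_w]), Or.inl (by norm_num [coe_jmat, Complex.I_pow_four])⟩

lemma torusHom_mem_Q_iff (z : Circle) : torusHom z ∈ Q ↔ z ^ 4 = 1 := by
  refine ⟨fun hz => ?_, fun hz => ?_⟩
  · rcases Q_le_monomialFourthRoots hz with ⟨-, -, hz4, -⟩ | ⟨hz0, -⟩
    · exact Circle.ext (by simpa using hz4)
    · simp at hz0
  · have hI : IsPrimitiveRoot (Circle.exp (π / 2) : ℂ) 4 := by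
      rw [coe_circleExp_pi_div_two]
      exact Complex.isPrimitiveRoot_I
    obtain ⟨k, rfl⟩ := mem_zpowers_iff.1 <|
      (Circle.ker_powMonoidHom_eq_zpowers hI).le (show z ∈ (powMonoidHom 4).ker from hz)
    rw [map_zpow, ← jmat_eq_torusHom]
    exact zpow_mem jmat_mem_Q k

lemma map_torusHom_ker_pow_le_normalizer_Q :
    (powMonoidHom 8 : Circle →* Circle).ker.map torusHom ≤ normalizer (Q : Set SU2) := by
  rw [Q, le_normalizer_closure_iff]
  rintro _ ⟨z, hz, rfl⟩ g (rfl | rfl)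
  · rw [torusHom_mul_w_mul_inv]
    refine mul_mem ((torusHom_mem_Q_iff _).2 ?_) w_mem_Q
    rwa [← pow_mul]
  · rw [torusHom_mul_jmat_mul_inv]
    exact jmat_mem_Q

lemma comap_torusHom_normalizer_Q :
    (normalizer (Q : Set SU2)).comap torusHom = (powMonoidHom 8 : Circle →* Circle).ker := by
  refine le_antisymm (fun z hz => ?_) (map_le_iff_le_comap.1 map_torusHom_ker_pow_le_normalizer_Q)
  have hconj : torusHom (z ^ 2) * w ∈ Q := torusHom_mul_w_mul_inv z ▸ (hz w).1 w_mem_Q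
  rw [MonoidHom.mem_ker, powMonoidHom_apply, show 8 = 2 * 4 from rfl, pow_mul,
    ← torusHom_mem_Q_iff]
  exact (mul_mem_cancel_right w_mem_Q).1 hconj

/-- An element `diag (a, conj a)` of the diagonal maximal torus `T` of `SU(2)` normalizes
the quaternion subgroup `Q` if and only if `a ^ 8 = 1`; the intersection of `T` with the
normalizer of `Q` is the cyclic group of order `8` generated by `diag (e^{iπ/4}, e^{-iπ/4})`. -/
theorem torus_inter_normalizer_Q (T : Subgroup SU2) (hT : (T : Set SU2) = Tset) :
    (∀ x : SU2, x ∈ T →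
      (x ∈ Subgroup.normalizer (Q : Set SU2) ↔ ((x : Matrix (Fin 2) (Fin 2) ℂ) 0 0) ^ 8 = 1)) ∧
    T ⊓ Subgroup.normalizer (Q : Set SU2) = Subgroup.zpowers zeta ∧ orderOf zeta = 8 := by
  obtain rfl : T = torusHom.range := SetLike.coe_injective (hT.trans coe_range_torusHom.symm)
  have hζ := isPrimitiveRoot_circleExp_pi_div_four
  refine ⟨?_, ?_, ?_⟩
  · rintro _ ⟨z, rfl⟩
    rw [← mem_comap, comap_torusHom_normalizer_Q, MonoidHom.mem_ker, powMonoidHom_apply,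
      ← Circle.coe_eq_one, coe_torusHom]
    simp
  · rw [← map_comap_eq, comap_torusHom_normalizer_Q, Circle.ker_powMonoidHom_eq_zpowers hζ,
      MonoidHom.map_zpowers, zeta_eq_torusHom]
  · rw [zeta_eq_torusHom, orderOf_injective torusHom torusHom_injective,
      ← orderOf_injective Circle.coeHom Circle.coe_injective]
    exact hζ.eq_orderOf.symm
end
end

section
/- The normalizer of Q in S, i.e. the subgroup of those elements x of S with x·Q·x⁻¹ = Q, is isomorphic to the generalized quaternion group Q₁₆ of order 16 (the group with presentation ⟨a, b | a⁸ = 1, a⁴ = b², b⁻¹ab = a⁻¹⟩); it is generated by diag(e^{iπ/4}, e^{−iπ/4}) and w. -/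
/-! Every element of `S` is diagonal, `diag (a, conj a)`, or antidiagonal,
`[[0, a], [-conj a, 0]]`, and `Q` consists of the diagonal and antidiagonal elements with
`a ^ 4 = 1`. Conjugation by `diag (a, conj a)` fixes the diagonal elements and multiplies the
entry of an antidiagonal one by `a ^ 2`, so a diagonal element normalizes `Q` iff `a ^ 8 = 1`, that
is, iff it is a power of `ζ = diag (e^{iπ/4}, e^{-iπ/4})`; an antidiagonal element of `S` is `w`
times a diagonal one. Finally `w ^ 2 = ζ ^ 4` and `w⁻¹ ζ w = ζ⁻¹` are the defining relations of
`Q₁₆`, and the homomorphism `Q₁₆ → SU(2)` they define is injective because `ζ` has order `8`. -/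

open Matrix Complex

noncomputable section

section

variable {G : Type*} [Group G] {a x : G}

lemma pow_val_add_of_pow_eq_one {m : ℕ} [NeZero m] (ha : a ^ m = 1) (i j : ZMod m) :
    a ^ (i + j).val = a ^ i.val * a ^ j.val := by
  rw [ZMod.val_add, ← pow_eq_pow_mod _ ha, pow_add]

lemma pow_val_neg_of_pow_eq_one {m : ℕ} [NeZero m] (ha : a ^ m = 1) (i : ZMod m) :
    a ^ (-i).val = (a ^ i.val)⁻¹ :=
  eq_inv_of_mul_eq_one_left <| by
    rw [← pow_val_add_of_pow_eq_one ha, neg_add_cancel, ZMod.val_zero, pow_zero]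

lemma pow_mul_eq_mul_inv_pow_of_conj_eq_inv (hxa : x⁻¹ * a * x = a⁻¹) (k : ℕ) :
    a ^ k * x = x * (a ^ k)⁻¹ := by
  have : x⁻¹ * a ^ k * x = (a ^ k)⁻¹ := by
    rw [← inv_pow, ← hxa]
    simpa using (conj_pow (a := x⁻¹) (b := a) (i := k)).symm
  rw [← this]
  group

end

namespace QuaternionGroup

variable {G : Type*} [Group G] {n : ℕ} [NeZero n] {a x : G}

def lift (ha : a ^ (2 * n) = 1) (hx : x ^ 2 = a ^ n) (hxa : x⁻¹ * a * x = a⁻¹) :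
    QuaternionGroup n →* G where
  toFun
    | .a i => a ^ i.val
    | .xa i => x * a ^ i.val
  map_one' := by simp [← a_zero]
  map_mul' := by
    have hadd := pow_val_add_of_pow_eq_one ha
    have hneg := pow_val_neg_of_pow_eq_one ha
    have hcomm := pow_mul_eq_mul_inv_pow_of_conj_eq_inv hxa
    rintro (i | i) (j | j)
    · simp [a_mul_a, hadd]
    · simp only [a_mul_xa, sub_eq_neg_add, hadd, hneg, ← mul_assoc, hcomm]
    · simp [xa_mul_a, hadd, mul_assoc]
    · simp only [xa_mul_xa, sub_eq_neg_add]
      rw [hadd, hadd, hneg, ZMod.val_natCast, ← pow_eq_pow_mod _ ha, mul_assoc x,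
        ← mul_assoc (a ^ i.val), hcomm]
      simp only [← mul_assoc, ← sq, hx]
      group

variable (ha : a ^ (2 * n) = 1) (hx : x ^ 2 = a ^ n) (hxa : x⁻¹ * a * x = a⁻¹)

@[simp] lemma lift_a (i : ZMod (2 * n)) : lift ha hx hxa (.a i) = a ^ i.val := rfl

@[simp] lemma lift_xa (i : ZMod (2 * n)) : lift ha hx hxa (.xa i) = x * a ^ i.val := rfl

lemma range_lift : (lift ha hx hxa).range = Subgroup.closure {a, x} := by
  apply le_antisymm
  · rintro _ ⟨i | i, rfl⟩
    · exact pow_mem (Subgroup.subset_closure (by simp)) _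
    · exact mul_mem (Subgroup.subset_closure (by simp))
        (pow_mem (Subgroup.subset_closure (by simp)) _)
  · rw [Subgroup.closure_le]
    rintro _ (rfl | rfl)
    · exact ⟨.a 1, by rw [lift_a, ZMod.val_one_eq_one_mod, ← pow_eq_pow_mod _ ha, pow_one]⟩
    · exact ⟨.xa 0, by simp⟩

lemma lift_injective (hord : orderOf a = 2 * n) : Function.Injective (lift ha hx hxa) := by
  rw [injective_iff_map_eq_one]
  rintro (i | i) h
  · rw [lift_a] at h
    have hdvd : 2 * n ∣ i.val := hord.symm.dvd.trans (orderOf_dvd_of_pow_eq_one h)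
    rw [(ZMod.val_eq_zero i).mp (Nat.eq_zero_of_dvd_of_lt hdvd (ZMod.val_lt i)), a_zero]
  · exfalso
    have hxi : x = (a ^ i.val)⁻¹ := eq_inv_of_mul_eq_one_left h
    have hcomm : x⁻¹ * a * x = a := by rw [hxi]; group
    have ha2 : a ^ 2 = 1 := by rw [sq, mul_eq_one_iff_eq_inv, ← hxa, hcomm]
    have han : a ^ n = 1 := by
      rw [← hx, hxi, inv_pow, ← pow_mul, mul_comm, pow_mul, ha2, one_pow, inv_one]
    have hn := Nat.pos_of_neZero n
    have := Nat.le_of_dvd hn (hord.symm.dvd.trans (orderOf_dvd_of_pow_eq_one han))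
    omega

end QuaternionGroup

open ComplexConjugate

namespace SU2

def diagMat (a : ℂ) : Matrix (Fin 2) (Fin 2) ℂ := !![a, 0; 0, conj a]

def antidiagMat (a : ℂ) : Matrix (Fin 2) (Fin 2) ℂ := !![0, a; -conj a, 0]

lemma diagMat_mul_diagMat (a b : ℂ) : diagMat a * diagMat b = diagMat (a * b) := by
  simp [diagMat]

lemma diagMat_mul_antidiagMat (a b : ℂ) : diagMat a * antidiagMat b = antidiagMat (a * b) := by
  simp [diagMat, antidiagMat]

lemma antidiagMat_mul_diagMat (a b : ℂ) :
    antidiagMat a * diagMat b = antidiagMat (a * conj b) := by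
  simp [diagMat, antidiagMat, mul_comm]

lemma antidiagMat_mul_antidiagMat (a b : ℂ) :
    antidiagMat a * antidiagMat b = diagMat (-(a * conj b)) := by
  simp [diagMat, antidiagMat, mul_comm]

lemma star_diagMat (a : ℂ) : star (diagMat a) = diagMat (conj a) := by
  ext i j; fin_cases i <;> fin_cases j <;> simp [diagMat]

lemma star_antidiagMat (a : ℂ) : star (antidiagMat a) = antidiagMat (-a) := by
  ext i j; fin_cases i <;> fin_cases j <;> simp [antidiagMat]

lemma diagMat_one : diagMat 1 = 1 := by
  simp [diagMat, Matrix.one_fin_two]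

lemma diagMat_pow (a : ℂ) (k : ℕ) : diagMat a ^ k = diagMat (a ^ k) := by
  induction k with
  | zero => simp [diagMat_one]
  | succ k ih => rw [pow_succ, pow_succ, ih, diagMat_mul_diagMat]

lemma diagMat_injective : Function.Injective diagMat := fun a b h => by
  simpa [diagMat] using congrFun (congrFun h 0) 0

lemma antidiagMat_injective : Function.Injective antidiagMat := fun a b h => by
  simpa [antidiagMat] using congrFun (congrFun h 0) 1

lemma diagMat_ne_antidiagMat {a : ℂ} (ha : a ≠ 0) (b : ℂ) : diagMat a ≠ antidiagMat b :=
  fun h => ha (by simpa [diagMat, antidiagMat] using congrFun (congrFun h 0) 0)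

lemma coe_inv (x : SU2) : ((x⁻¹ : SU2) : Matrix (Fin 2) (Fin 2) ℂ) = star x.1 := rfl

lemma mul_conj_eq_one_of_coe_eq_diagMat {x : SU2} {a : ℂ} (hx : x.1 = diagMat a) :
    a * conj a = 1 := by
  have hdet : x.1.det = 1 := x.2.2
  rwa [hx, diagMat, Matrix.det_fin_two_of, mul_zero, sub_zero] at hdet

lemma coe_w : (w : Matrix (Fin 2) (Fin 2) ℂ) = antidiagMat 1 := by
  simp [w, antidiagMat]

lemma coe_jmat : (jmat : Matrix (Fin 2) (Fin 2) ℂ) = diagMat I := by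
  simp [jmat, diagMat]

lemma conj_exp_pi_mul_I_div_four :
    conj (exp (Real.pi * I / 4)) = exp (-(Real.pi * I / 4)) := by
  rw [← exp_conj, map_div₀, map_mul, conj_ofReal, conj_I, map_ofNat, mul_neg, neg_div]

lemma exp_pi_mul_I_div_four_pow_four : exp (Real.pi * I / 4) ^ 4 = -1 := by
  rw [← exp_nat_mul, Nat.cast_ofNat, mul_div_cancel₀ _ (by norm_num), exp_pi_mul_I]

lemma isPrimitiveRoot_exp_pi_mul_I_div_four : IsPrimitiveRoot (exp (Real.pi * I / 4)) 8 := by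
  convert isPrimitiveRoot_exp 8 (by norm_num) using 2
  push_cast
  ring

lemma coe_zeta : (zeta : Matrix (Fin 2) (Fin 2) ℂ) = diagMat (exp (Real.pi * I / 4)) := by
  rw [diagMat, conj_exp_pi_mul_I_div_four]
  rfl

def monomial (U : Submonoid ℂ) (hneg : ∀ c ∈ U, -c ∈ U) (hconj : ∀ c ∈ U, conj c ∈ U) :
    Subgroup SU2 where
  carrier := {x | ∃ c ∈ U, x.1 = diagMat c ∨ x.1 = antidiagMat c}
  one_mem' := ⟨1, U.one_mem, Or.inl diagMat_one.symm⟩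
  mul_mem' := by
    rintro x y ⟨a, ha, hx | hx⟩ ⟨b, hb, hy | hy⟩ <;>
      simp only [Set.mem_ofPred_eq, Submonoid.coe_mul, hx, hy, diagMat_mul_diagMat,
        diagMat_mul_antidiagMat, antidiagMat_mul_diagMat, antidiagMat_mul_antidiagMat]
    · exact ⟨_, U.mul_mem ha hb, Or.inl rfl⟩
    · exact ⟨_, U.mul_mem ha hb, Or.inr rfl⟩
    · exact ⟨_, U.mul_mem ha (hconj b hb), Or.inr rfl⟩
    · exact ⟨_, hneg _ (U.mul_mem ha (hconj b hb)), Or.inl rfl⟩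
  inv_mem' := by
    rintro x ⟨a, ha, hx | hx⟩ <;>
      simp only [Set.mem_ofPred_eq, coe_inv, hx, star_diagMat, star_antidiagMat]
    · exact ⟨_, hconj a ha, Or.inl rfl⟩
    · exact ⟨_, hneg a ha, Or.inr rfl⟩

lemma mem_monomial {U : Submonoid ℂ} {hneg : ∀ c ∈ U, -c ∈ U} {hconj : ∀ c ∈ U, conj c ∈ U}
    {x : SU2} :
    x ∈ monomial U hneg hconj ↔ ∃ c ∈ U, x.1 = diagMat c ∨ x.1 = antidiagMat c :=
  Iff.rfl

lemma exists_coe_eq_diagMat_or_antidiagMat_of_mem_S {x : SU2} (hx : x ∈ S) :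
    ∃ c : ℂ, x.1 = diagMat c ∨ x.1 = antidiagMat c := by
  suffices S ≤ monomial ⊤ (fun _ _ => trivial) (fun _ _ => trivial) by
    obtain ⟨c, -, hc⟩ := this hx
    exact ⟨c, hc⟩
  rw [S, Subgroup.closure_le]
  rintro x (rfl | ⟨⟨a, -, hx⟩, -⟩)
  · exact ⟨1, trivial, Or.inr coe_w⟩
  · exact ⟨a, trivial, Or.inl hx⟩

lemma Q_eq_monomial : Q = monomial (MonoidHom.mker (powMonoidHom 4 : ℂ →* ℂ))
    (fun c hc => by simpa [MonoidHom.mem_mker, Even.neg_pow (by decide : Even 4)] using hc)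
    (fun c hc => by simp_all [MonoidHom.mem_mker, ← map_pow]) := by
  apply le_antisymm
  · rw [Q, Subgroup.closure_le]
    rintro x (rfl | rfl)
    · exact ⟨1, by simp, Or.inr coe_w⟩
    · exact ⟨I, by simp [MonoidHom.mem_mker, I_pow_four], Or.inl coe_jmat⟩
  · rintro x ⟨c, hc, hx⟩
    obtain ⟨k, -, rfl⟩ := isPrimitiveRoot_I.eq_pow_of_pow_eq_one (MonoidHom.mem_mker.mp hc)
    have hjk : ((jmat ^ k : SU2) : Matrix (Fin 2) (Fin 2) ℂ) = diagMat (I ^ k) := by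
      rw [SubmonoidClass.coe_pow, coe_jmat, diagMat_pow]
    have hjkQ : jmat ^ k ∈ Q := pow_mem (Subgroup.subset_closure (by simp)) k
    rcases hx with hx | hx
    · rwa [Subtype.ext (hx.trans hjk.symm)]
    · have : x = jmat ^ k * w := Subtype.ext <| by
        rw [hx, Submonoid.coe_mul, hjk, coe_w, diagMat_mul_antidiagMat, mul_one]
      rw [this]
      exact mul_mem hjkQ (Subgroup.subset_closure (by simp))

lemma mem_Q_iff {x : SU2} :
    x ∈ Q ↔ ∃ c : ℂ, c ^ 4 = 1 ∧ (x.1 = diagMat c ∨ x.1 = antidiagMat c) := by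
  rw [Q_eq_monomial, mem_monomial]
  simp [MonoidHom.mem_mker]

lemma coe_conj_of_diagMat {x y : SU2} {a c : ℂ} (hx : x.1 = diagMat a) (hy : y.1 = diagMat c) :
    (x * y * x⁻¹).1 = diagMat c := by
  rw [Submonoid.coe_mul, Submonoid.coe_mul, coe_inv, hx, hy, star_diagMat, diagMat_mul_diagMat,
    diagMat_mul_diagMat, mul_right_comm, mul_conj_eq_one_of_coe_eq_diagMat hx, one_mul]

lemma coe_conj_of_antidiagMat {x y : SU2} {a c : ℂ} (hx : x.1 = diagMat a)
    (hy : y.1 = antidiagMat c) : (x * y * x⁻¹).1 = antidiagMat (a ^ 2 * c) := by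
  rw [Submonoid.coe_mul, Submonoid.coe_mul, coe_inv, hx, hy, star_diagMat, diagMat_mul_antidiagMat,
    antidiagMat_mul_diagMat, conj_conj]
  ring_nf

lemma conj_mem_Q_of_diagMat {x y : SU2} {a : ℂ} (hx : x.1 = diagMat a) (ha : a ^ 8 = 1)
    (hy : y ∈ Q) : x * y * x⁻¹ ∈ Q := by
  obtain ⟨c, hc, hy | hy⟩ := mem_Q_iff.mp hy
  · exact mem_Q_iff.mpr ⟨c, hc, Or.inl (coe_conj_of_diagMat hx hy)⟩
  · refine mem_Q_iff.mpr ⟨a ^ 2 * c, ?_, Or.inr (coe_conj_of_antidiagMat hx hy)⟩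
    rw [mul_pow, ← pow_mul, ha, hc, one_mul]

lemma w_mem_Q : w ∈ Q := Subgroup.subset_closure (by simp)

lemma mem_normalizer_Q_iff_of_diagMat {x : SU2} {a : ℂ} (hx : x.1 = diagMat a) :
    x ∈ Subgroup.normalizer (Q : Set SU2) ↔ a ^ 8 = 1 := by
  refine ⟨fun hn => ?_, fun ha => Subgroup.mem_set_normalizer_iff.mpr fun y => ⟨?_, fun hy => ?_⟩⟩
  · have hw := coe_conj_of_antidiagMat hx coe_w
    obtain ⟨c, hc, h | h⟩ := mem_Q_iff.mp ((Subgroup.mem_set_normalizer_iff.mp hn w).mp w_mem_Q)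
    · exact absurd (h.symm.trans hw) (diagMat_ne_antidiagMat (by rintro rfl; simp at hc) _)
    · rw [mul_one] at hw
      rw [show 8 = 2 * 4 by rfl, pow_mul, antidiagMat_injective (hw.symm.trans h), hc]
  · exact conj_mem_Q_of_diagMat hx ha
  · have hx' : (x⁻¹).1 = diagMat (conj a) := by rw [coe_inv, hx, star_diagMat]
    simpa [mul_assoc] using conj_mem_Q_of_diagMat hx' (by rw [← map_pow, ha, map_one]) hy

lemma zeta_pow_eight : zeta ^ 8 = 1 := Subtype.ext <| by
  rw [SubmonoidClass.coe_pow, coe_zeta, diagMat_pow,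
    isPrimitiveRoot_exp_pi_mul_I_div_four.pow_eq_one, diagMat_one, OneMemClass.coe_one]

lemma zeta_mem_S : zeta ∈ S := by
  refine Subgroup.subset_closure (Or.inr ⟨⟨_, ?_, coe_zeta⟩, 3, zeta_pow_eight⟩)
  rw [norm_exp]
  simp

lemma w_mem_S : w ∈ S := Subgroup.subset_closure (Or.inl rfl)

lemma mem_closure_zeta_w_of_diagMat {x : SU2} {a : ℂ} (hx : x.1 = diagMat a)
    (hn : x ∈ Subgroup.normalizer (Q : Set SU2)) : x ∈ Subgroup.closure {zeta, w} := by
  obtain ⟨k, -, rfl⟩ := isPrimitiveRoot_exp_pi_mul_I_div_four.eq_pow_of_pow_eq_one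
    ((mem_normalizer_Q_iff_of_diagMat hx).mp hn)
  have : x = zeta ^ k := Subtype.ext <| by rw [hx, SubmonoidClass.coe_pow, coe_zeta, diagMat_pow]
  rw [this]
  exact pow_mem (Subgroup.subset_closure (by simp)) k

lemma S_inf_normalizer_Q_eq_closure :
    S ⊓ Subgroup.normalizer (Q : Set SU2) = Subgroup.closure {zeta, w} := by
  apply le_antisymm
  · rintro x ⟨hS, hN⟩
    obtain ⟨a, hx | hx⟩ := exists_coe_eq_diagMat_or_antidiagMat_of_mem_S hS
    · exact mem_closure_zeta_w_of_diagMat hx hN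
    · have hwx : (w⁻¹ * x).1 = diagMat (conj a) := by
        rw [Submonoid.coe_mul, coe_inv, coe_w, star_antidiagMat, hx, antidiagMat_mul_antidiagMat,
          neg_one_mul, neg_neg]
      have := mem_closure_zeta_w_of_diagMat hwx
        (mul_mem (inv_mem (Subgroup.le_normalizer w_mem_Q)) hN)
      simpa using mul_mem (Subgroup.subset_closure (by simp) : w ∈ Subgroup.closure {zeta, w}) this
  · rw [Subgroup.closure_le]
    rintro _ (rfl | rfl)
    · exact ⟨zeta_mem_S, (mem_normalizer_Q_iff_of_diagMat coe_zeta).mpr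
        isPrimitiveRoot_exp_pi_mul_I_div_four.pow_eq_one⟩
    · exact ⟨w_mem_S, Subgroup.le_normalizer w_mem_Q⟩

lemma w_sq : w ^ 2 = zeta ^ 4 := Subtype.ext <| by
  rw [sq, Submonoid.coe_mul, coe_w, antidiagMat_mul_antidiagMat, SubmonoidClass.coe_pow, coe_zeta,
    diagMat_pow, exp_pi_mul_I_div_four_pow_four, map_one, mul_one]

lemma inv_w_mul_zeta_mul_w : w⁻¹ * zeta * w = zeta⁻¹ := Subtype.ext <| by
  simp only [Submonoid.coe_mul, coe_inv, coe_w, coe_zeta, star_antidiagMat, star_diagMat,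
    antidiagMat_mul_diagMat, antidiagMat_mul_antidiagMat, map_one, mul_one, neg_one_mul, neg_neg]

lemma orderOf_zeta : orderOf zeta = 8 := by
  refine orderOf_eq_prime_pow (p := 2) (n := 2) ?_ zeta_pow_eight
  rw [show 2 ^ 2 = 4 by norm_num]
  intro h
  have := congrArg Subtype.val h
  rw [SubmonoidClass.coe_pow, coe_zeta, diagMat_pow, exp_pi_mul_I_div_four_pow_four,
    OneMemClass.coe_one, ← diagMat_one] at this
  norm_num [diagMat_injective.eq_iff] at this

end SU2

/-- The normalizer of `Q` in `S` (the elements `x` of `S` with `x Q x⁻¹ = Q`) is generated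
by `diag (e^{iπ/4}, e^{-iπ/4})` and `w`, and is isomorphic to the generalized quaternion
group `Q₁₆` of order `16`. -/
theorem normalizer_of_Q_in_S :
    S ⊓ Subgroup.normalizer (Q : Set SU2) = Subgroup.closure {zeta, w} ∧
    Nonempty (↥(S ⊓ Subgroup.normalizer (Q : Set SU2)) ≃* QuaternionGroup 4) := by
  have hS := SU2.S_inf_normalizer_Q_eq_closure
  let φ := QuaternionGroup.lift SU2.zeta_pow_eight SU2.w_sq SU2.inv_w_mul_zeta_mul_w
  have hrange : S ⊓ Subgroup.normalizer (Q : Set SU2) = φ.range := by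
    rw [hS, QuaternionGroup.range_lift]
  exact ⟨hS, ⟨(MulEquiv.subgroupCongr hrange).trans
    (MonoidHom.ofInjective (QuaternionGroup.lift_injective _ _ _ SU2.orderOf_zeta)).symm⟩⟩
end
end
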